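/- arXiv:1509.06860 — 3 statements merged into one kernel-verified Lean document; each statement's English description precedes it below -/
import Mathlib

section
/- Let D be a module over a commutative ring equipped with two bilinear operations ≺ and ≻ satisfying the dendriform (pre-associative) axioms: (a ≺ b) ≺ c = a ≺ (b ≺ c + b ≻ c), (a ≻ b) ≺ c = a ≻ (b ≺ c), and a ≻ (b ≻ c) = (a ≺ b + a ≻ b) ≻ c. Define a new bilinear operation a · b := a ≻ b − b ≺ a. Then · satisfies the (left) pre-Lie identity: (a · b) · c − a · (b · c) = (b · a) · c − b · (a · c) for all a, b, c in D. -/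
/-!
Expanding with the three dendriform axioms, the associator of `a · b = a ≻ b − b ≺ a` becomes
`a ≻ (c ≺ b) + b ≻ (c ≺ a) − (a ≺ b + b ≺ a) ≻ c − c ≺ (a ≻ b + b ≻ a)`,
which is visibly symmetric in `a` and `b`.
-/

section Dendriform

variable {R : Type*} [CommRing R] {D : Type*} [AddCommGroup D] [Module R D]
  (prec succ : D →ₗ[R] D →ₗ[R] D)

def dendriformDot (a b : D) : D :=
  succ a b - prec b a

variable {prec succ}

theorem dendriformDot_associator
    (h1 : ∀ a b c : D, prec (prec a b) c = prec a (prec b c + succ b c))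
    (h2 : ∀ a b c : D, prec (succ a b) c = succ a (prec b c))
    (h3 : ∀ a b c : D, succ a (succ b c) = succ (prec a b + succ a b) c) (a b c : D) :
    dendriformDot prec succ (dendriformDot prec succ a b) c
        - dendriformDot prec succ a (dendriformDot prec succ b c) =
      succ a (prec c b) + succ b (prec c a) - succ (prec a b + prec b a) c
        - prec c (succ a b + succ b a) := by
  simp only [dendriformDot, map_sub, LinearMap.sub_apply]
  rw [h3 a b c, h2 b c a, h1 c b a]
  simp only [map_add, LinearMap.add_apply]
  abel

end Dendriform

/-- In any dendriform (pre-associative) algebra over a commutative ring,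
the operation `a · b = a ≻ b − b ≺ a` satisfies the left pre-Lie identity. -/
theorem dendriform_preLie
    {R : Type*} [CommRing R] {D : Type*} [AddCommGroup D] [Module R D]
    (prec succ : D →ₗ[R] D →ₗ[R] D)
    (h1 : ∀ a b c : D, prec (prec a b) c = prec a (prec b c + succ b c))
    (h2 : ∀ a b c : D, prec (succ a b) c = succ a (prec b c))
    (h3 : ∀ a b c : D, succ a (succ b c) = succ (prec a b + succ a b) c)
    (dot : D → D → D)
    (hdot : ∀ a b : D, dot a b = succ a b - prec b a) :
    ∀ a b c : D,
      dot (dot a b) c - dot a (dot b c) = dot (dot b a) c - dot b (dot a c) := by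
  obtain rfl : dot = dendriformDot prec succ := funext fun a => funext (hdot a)
  intro a b c
  rw [dendriformDot_associator h1 h2 h3, dendriformDot_associator h1 h2 h3,
    add_comm (prec b a), add_comm (succ b a), add_comm (succ b (prec c a))]
end

section
/- Let D be a module over a commutative ring equipped with two bilinear operations ≺ and ≻ satisfying the dendriform (pre-associative) axioms: (a ≺ b) ≺ c = a ≺ (b ≺ c + b ≻ c), (a ≻ b) ≺ c = a ≻ (b ≺ c), and a ≻ (b ≻ c) = (a ≺ b + a ≻ b) ≻ c; write a * b := a ≺ b + a ≻ b and [x₁, …, x_m] := x₁ ≻ (x₂ ≻ (⋯(x_{m−1} ≻ x_m)⋯)). Then for all w₁, …, w_k, u, v ∈ D (k ≥ 1): (w₁ * ⋯ * w_k) ≻ (u * v) = [w₁, …, w_k, u] * v − [w₁, …, w_k, u] ≻ v + [w₁, …, w_k, u, v]. -/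
/-!
The third axiom says `x ≻ (y ≻ z) = (x * y) ≻ z`, so `(w₁ * ⋯ * w_k) ≻ z = [w₁, …, w_k, z]`.
Taking `z = u ≺ v + u ≻ v`, the right-normed product is additive in its last entry, and the second
axiom `(a ≻ b) ≺ c = a ≻ (b ≺ c)` moves `≺ v` out of it: `[w₁, …, w_k, u ≺ v] = [w₁, …, w_k, u] ≺ v`.
-/

namespace Dendriform

variable {R : Type*} [CommSemiring R] {D : Type*} [AddCommMonoid D] [Module R D]

lemma foldr_succ_add (succ : D →ₗ[R] D →ₗ[R] D) (l : List D) (y y' : D) :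
    l.foldr (fun a b => succ a b) (y + y')
      = l.foldr (fun a b => succ a b) y + l.foldr (fun a b => succ a b) y' := by
  induction l with
  | nil => rfl
  | cons a l ih => simp only [List.foldr_cons, ih, map_add]

lemma foldr_succ_prec (prec succ : D →ₗ[R] D →ₗ[R] D)
    (h2 : ∀ a b c : D, prec (succ a b) c = succ a (prec b c)) (l : List D) (u v : D) :
    l.foldr (fun a b => succ a b) (prec u v) = prec (l.foldr (fun a b => succ a b) u) v := by
  induction l with
  | nil => rfl
  | cons a l ih => simp only [List.foldr_cons, ih, h2]

lemma succ_foldl_star (prec succ : D →ₗ[R] D →ₗ[R] D)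
    (h3 : ∀ a b c : D, succ a (succ b c) = succ (prec a b + succ a b) c)
    (star : D → D → D) (hstar : ∀ a b : D, star a b = prec a b + succ a b)
    (ws : List D) (w y : D) :
    succ (ws.foldl star w) y = (w :: ws).foldr (fun a b => succ a b) y := by
  induction ws generalizing w with
  | nil => rfl
  | cons a ws ih => rw [List.foldl_cons, ih, List.foldr_cons, List.foldr_cons, hstar, ← h3]; rfl

end Dendriform

theorem dendriform_leftMul_star_product_general
    {R : Type*} [CommRing R] {D : Type*} [AddCommGroup D] [Module R D]
    (prec succ : D →ₗ[R] D →ₗ[R] D)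
    (h2 : ∀ a b c : D, prec (succ a b) c = succ a (prec b c))
    (h3 : ∀ a b c : D, succ a (succ b c) = succ (prec a b + succ a b) c)
    (star : D → D → D)
    (hstar : ∀ a b : D, star a b = prec a b + succ a b) :
    ∀ (w : D) (ws : List D) (u v : D),
      succ (ws.foldl star w) (star u v)
        = star ((w :: ws).foldr (fun a b => succ a b) u) v
          - succ ((w :: ws).foldr (fun a b => succ a b) u) v
          + (w :: ws).foldr (fun a b => succ a b) (succ u v) := by
  intro w ws u v
  rw [Dendriform.succ_foldl_star prec succ h3 star hstar, hstar u v, Dendriform.foldr_succ_add,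
    Dendriform.foldr_succ_prec prec succ h2, hstar]
  abel

/-- In any dendriform algebra, with `a * b := a ≺ b + a ≻ b` and
`[x₁,…,x_m] := x₁ ≻ (x₂ ≻ (⋯(x_{m−1} ≻ x_m)⋯))`, one has for k ≥ 1:
`(w₁ * ⋯ * w_k) ≻ (u * v)
   = [w₁,…,w_k,u] * v − [w₁,…,w_k,u] ≻ v + [w₁,…,w_k,u,v]`. -/
theorem dendriform_leftMul_star_product
    {R : Type*} [CommRing R] {D : Type*} [AddCommGroup D] [Module R D]
    (prec succ : D →ₗ[R] D →ₗ[R] D)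
    (h1 : ∀ a b c : D, prec (prec a b) c = prec a (prec b c + succ b c))
    (h2 : ∀ a b c : D, prec (succ a b) c = succ a (prec b c))
    (h3 : ∀ a b c : D, succ a (succ b c) = succ (prec a b + succ a b) c)
    (star : D → D → D)
    (hstar : ∀ a b : D, star a b = prec a b + succ a b) :
    ∀ (w : D) (ws : List D) (u v : D),
      succ (ws.foldl star w) (star u v)
        = star ((w :: ws).foldr (fun a b => succ a b) u) v
          - succ ((w :: ws).foldr (fun a b => succ a b) u) v
          + (w :: ws).foldr (fun a b => succ a b) (succ u v) :=
  dendriform_leftMul_star_product_general prec succ h2 h3 star hstar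
end

section
/- Let A be a (not necessarily unital) associative ring whose product is written a · b, let D be a module over a commutative ring equipped with two bilinear operations ≺ and ≻ satisfying the dendriform (pre-associative) axioms: (x ≺ y) ≺ z = x ≺ (y ≺ z + y ≻ z), (x ≻ y) ≺ z = x ≻ (y ≺ z), x ≻ (y ≻ z) = (x ≺ y + x ≻ y) ≻ z; write x * y := x ≺ y + x ≻ y. Suppose f : A → D is an additive map satisfying f(a) * f(b) = f(a · b) for all a, b ∈ A (i.e., f is a homomorphism of A into D^(+)). For w₁, …, w_k ∈ D (k ≥ 0) let L(x) := w₁ ≻ (w₂ ≻ (⋯(w_k ≻ x)⋯)) (with L the identity when k = 0). Then for all a, b ∈ A: L(f(a)) * f(b) − L(f(a)) ≻ f(b) + L(f(a) ≻ f(b)) = L(f(a · b)). -/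
/-! The dendriform axiom `(x ≻ y) ≺ z = x ≻ (y ≺ z)` moves `· ≺ v` inside
each `wᵢ ≻ ·`, so induction on the word gives `L u ≺ v + L (u ≻ v) = L (u * v)`. With `u = f a`,
`v = f b` the left side is `L (f a) * f b - L (f a) ≻ f b + L (f a ≻ f b)`, and `f a * f b = f (a · b)`. -/

theorem prec_foldr_succ_add_foldr_succ {R D : Type*} [CommSemiring R] [AddCommMonoid D]
    [Module R D] (prec succ : D →ₗ[R] D →ₗ[R] D)
    (h2 : ∀ x y z : D, prec (succ x y) z = succ x (prec y z)) (ws : List D) (x y : D) :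
    prec (ws.foldr (fun a b => succ a b) x) y + ws.foldr (fun a b => succ a b) (succ x y)
      = ws.foldr (fun a b => succ a b) (prec x y + succ x y) := by
  induction ws with
  | nil => rfl
  | cons w ws ih => simp only [List.foldr_cons, h2, ← map_add, ih]

theorem dendriform_envelope_M_relation_general
    {A : Type*} [NonUnitalRing A]
    {R : Type*} [CommRing R] {D : Type*} [AddCommGroup D] [Module R D]
    (prec succ : D →ₗ[R] D →ₗ[R] D)
    (h2 : ∀ x y z : D, prec (succ x y) z = succ x (prec y z))
    (star : D → D → D)
    (hstar : ∀ x y : D, star x y = prec x y + succ x y)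
    (f : A → D)
    (hmul : ∀ a b : A, star (f a) (f b) = f (a * b))
    (ws : List D)
    (L : D → D)
    (hL : ∀ x : D, L x = ws.foldr (fun a b => succ a b) x) :
    ∀ a b : A,
      star (L (f a)) (f b) - succ (L (f a)) (f b) + L (succ (f a) (f b))
        = L (f (a * b)) := by
  intro a b
  rw [← hmul, hstar, hstar, add_sub_cancel_right, hL, hL, hL]
  exact prec_foldr_succ_add_foldr_succ prec succ h2 ws (f a) (f b)

/-- Let `A` be a (not necessarily unital) associative ring and `D` a dendriform
algebra over a commutative ring, with `x * y := x ≺ y + x ≻ y`. If `f : A → D`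
is additive and satisfies `f a * f b = f (a · b)`, then for every operator
`L x := w₁ ≻ (w₂ ≻ (⋯(w_k ≻ x)⋯))` (k ≥ 0) and all `a b : A`:
`L (f a) * f b − L (f a) ≻ f b + L (f a ≻ f b) = L (f (a · b))`. -/
theorem dendriform_envelope_M_relation
    {A : Type*} [NonUnitalRing A]
    {R : Type*} [CommRing R] {D : Type*} [AddCommGroup D] [Module R D]
    (prec succ : D →ₗ[R] D →ₗ[R] D)
    (h1 : ∀ x y z : D, prec (prec x y) z = prec x (prec y z + succ y z))
    (h2 : ∀ x y z : D, prec (succ x y) z = succ x (prec y z))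
    (h3 : ∀ x y z : D, succ x (succ y z) = succ (prec x y + succ x y) z)
    (star : D → D → D)
    (hstar : ∀ x y : D, star x y = prec x y + succ x y)
    (f : A → D)
    (hadd : ∀ a b : A, f (a + b) = f a + f b)
    (hmul : ∀ a b : A, star (f a) (f b) = f (a * b))
    (ws : List D)
    (L : D → D)
    (hL : ∀ x : D, L x = ws.foldr (fun a b => succ a b) x) :
    ∀ a b : A,
      star (L (f a)) (f b) - succ (L (f a)) (f b) + L (succ (f a) (f b))
        = L (f (a * b)) :=
  dendriform_envelope_M_relation_general prec succ h2 star hstar f hmul ws L hL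
end
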